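/- Let K be a field that contains an algebraically closed subfield. Then the set K̃ of arithmetically fixed elements of K is exactly the prime subfield of K (the smallest subfield of K). -/

import Mathlib

/-!
An element `r` of the prime subfield satisfies `r * b = a` for integers `a, b` with `b ≠ 0` in
`K`; any arithmetic map on `{-N, …, N} ∪ {r}`, `N ≥ |a|, |b|`, fixes these integers and hence `r`.

Conversely, let `r` lie outside the prime subfield `k` and let `A ∋ r` be finite. By the
Nullstellensatz the finitely generated `k`-algebra `k[A]` maps to the algebraic closure `Ω` of `k`
inside `F`. As `k` is perfect, `Ω / k` is Galois with fixed field `k`, so after composing with a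
suitable automorphism of `Ω` we get a ring hom `k[A] → K` moving `r`; extended arbitrarily to `K`
it is an arithmetic map on `A`.
-/

/-- A map `f` is *arithmetic* on a subset `A` of a field `K`. -/
def ArithmeticMap {K : Type*} [Field K] (A : Set K) (f : K → K) : Prop :=
  ((1 : K) ∈ A → f 1 = 1) ∧
  (∀ a b : K, a ∈ A → b ∈ A → a + b ∈ A → f (a + b) = f a + f b) ∧
  (∀ a b : K, a ∈ A → b ∈ A → a * b ∈ A → f (a * b) = f a * f b)

/-- An element `r` of a field `K` is *arithmetically fixed* if there is a finite set
`A ⊆ K` with `r ∈ A` such that every arithmetic map `f : A → K` fixes `r`. -/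
def ArithFixed {K : Type*} [Field K] (r : K) : Prop :=
  ∃ A : Finset K, r ∈ A ∧ ∀ f : K → K, ArithmeticMap (↑A : Set K) f → f r = r

namespace ArithmeticMap

variable {K : Type*} [Field K] {A : Set K} {f : K → K}

theorem map_zero (hf : ArithmeticMap A f) (h0 : (0 : K) ∈ A) : f 0 = 0 := by
  have h := hf.2.1 0 0 h0 h0 (by rwa [add_zero])
  rw [add_zero] at h
  exact left_eq_add.mp h

theorem map_natCast (hf : ArithmeticMap A f) {N : ℕ} (hA : ∀ n ≤ N, (n : K) ∈ A) :
    ∀ n ≤ N, f n = n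
  | 0, _ => by simpa using hf.map_zero (by simpa using hA 0 N.zero_le)
  | n + 1, hn => by
    have h1 : (1 : K) ∈ A := by simpa using hA 1 (by omega)
    have h := hf.2.1 n 1 (hA n (by omega)) h1 (by exact_mod_cast hA (n + 1) hn)
    push_cast
    rw [h, map_natCast hf hA n (by omega), hf.1 h1]

theorem map_intCast (hf : ArithmeticMap A f) {N : ℕ}
    (hA : ∀ z : ℤ, z.natAbs ≤ N → (z : K) ∈ A) {z : ℤ} (hz : z.natAbs ≤ N) : f z = z := by
  have hnat : ∀ n ≤ N, f n = n :=
    hf.map_natCast fun n hn => by exact_mod_cast hA n (by omega)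
  obtain ⟨n, rfl | rfl⟩ := Int.eq_nat_or_neg z
  · exact_mod_cast hnat n (by omega)
  · have hn : (n : K) ∈ A := by exact_mod_cast hA n (by omega)
    have h0 : (0 : K) ∈ A := by exact_mod_cast hA 0 (by omega)
    have hsum := hf.2.1 (-n : ℤ) n (hA _ hz) hn (by simpa using h0)
    simp only [Int.cast_neg, Int.cast_natCast, neg_add_cancel, hf.map_zero h0,
      hnat n (by omega)] at hsum ⊢
    exact (neg_eq_of_add_eq_zero_left hsum.symm).symm

theorem of_ringHom {S : Type*} [SetLike S K] [SubringClass S K] {s : S} (ψ : s →+* K)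
    (hA : A ⊆ s) : ArithmeticMap A (Function.extend (↑) ψ id) := by
  have hψ : ∀ x : s, Function.extend (↑) ψ id (x : K) = ψ x :=
    Subtype.val_injective.extend_apply _ _
  refine ⟨fun h1 => ?_, fun a b ha hb hab => ?_, fun a b ha hb hab => ?_⟩
  · exact (hψ 1).trans (map_one ψ)
  · exact (hψ (⟨a, hA ha⟩ + ⟨b, hA hb⟩)).trans
      ((map_add ψ _ _).trans (congrArg₂ (· + ·) (hψ _) (hψ _)).symm)
  · exact (hψ (⟨a, hA ha⟩ * ⟨b, hA hb⟩)).trans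
      ((map_mul ψ _ _).trans (congrArg₂ (· * ·) (hψ _) (hψ _)).symm)

end ArithmeticMap

section PrimeSubfield

variable {K : Type*} [Field K]

theorem Subfield.exists_mul_intCast_eq_of_mem_bot {r : K} (hr : r ∈ (⊥ : Subfield K)) :
    ∃ a b : ℤ, (b : K) ≠ 0 ∧ r * b = a := by
  obtain ⟨p, hp⟩ := CharP.exists K
  rcases CharP.char_is_prime_or_zero K p with hprime | rfl
  · have : Fact p.Prime := ⟨hprime⟩
    obtain ⟨n, rfl⟩ := (mem_bot_iff_intCast p K).mp hr
    exact ⟨n, 1, by simp, by simp⟩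
  · have := CharP.charP_to_charZero K
    rw [Subfield.bot_eq_of_charZero] at hr
    obtain ⟨q, rfl⟩ := hr
    exact ⟨q.num, q.den, by simp, by simp [Rat.cast_def]⟩

instance Subfield.perfectField_bot : PerfectField (⊥ : Subfield K) := by
  obtain ⟨p, hp⟩ := CharP.exists K
  rcases CharP.char_is_prime_or_zero K p with hprime | rfl
  · have : Fact p.Prime := ⟨hprime⟩
    let := Subfield.fintypeBot K p
    infer_instance
  · have := CharP.charP_to_charZero K
    infer_instance

theorem arithFixed_of_mul_intCast_eq {r : K} {a b : ℤ} (hb : (b : K) ≠ 0) (h : r * b = a) :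
    ArithFixed r := by
  classical
  let N := max a.natAbs b.natAbs
  let A : Finset K := insert r ((Finset.Icc (-N : ℤ) N).image (↑))
  have hA : ∀ z : ℤ, z.natAbs ≤ N → (z : K) ∈ (A : Set K) := fun z hz => by
    simp only [A, Finset.coe_insert, Finset.coe_image, Finset.coe_Icc]
    exact Or.inr ⟨z, ⟨by omega, by omega⟩, rfl⟩
  refine ⟨A, Finset.mem_insert_self _ _, fun f hf => mul_right_cancel₀ hb ?_⟩
  have ha : a.natAbs ≤ N := le_max_left _ _
  have hb' : b.natAbs ≤ N := le_max_right _ _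
  have hmul := hf.2.2 r b (Finset.mem_insert_self _ _) (hA b hb') (h ▸ hA a ha)
  rw [h, hf.map_intCast hA ha, hf.map_intCast hA hb'] at hmul
  exact hmul.symm.trans h.symm

theorem arithFixed_of_mem_bot {r : K} (hr : r ∈ (⊥ : Subfield K)) : ArithFixed r :=
  let ⟨_, _, hb, h⟩ := Subfield.exists_mul_intCast_eq_of_mem_bot hr
  arithFixed_of_mul_intCast_eq hb h

end PrimeSubfield

theorem IsAlgClosed.nonempty_algHom_of_finiteType (k R Ω : Type*) [Field k] [CommRing R]
    [Nontrivial R] [Algebra k R] [Algebra.FiniteType k R] [Field Ω] [IsAlgClosed Ω]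
    [Algebra k Ω] : Nonempty (R →ₐ[k] Ω) := by
  obtain ⟨m, hm⟩ := Ideal.exists_maximal R
  let := Ideal.Quotient.field m
  have : Algebra.FiniteType k (R ⧸ m) := .of_surjective _ (Ideal.Quotient.mkₐ_surjective k m)
  have : Module.Finite k (R ⧸ m) := finite_of_finite_type_of_isJacobsonRing k (R ⧸ m)
  exact ⟨IsAlgClosed.lift.comp (Ideal.Quotient.mkₐ k m)⟩

theorem exists_algEquiv_apply_ne {k Ω L : Type*} [Field k] [Field Ω] [Field L] [Algebra k Ω]
    [Algebra k L] [IsGalois k Ω] (j : Ω →ₐ[k] L) (z : Ω) {y : L}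
    (hy : y ∉ Set.range (algebraMap k L)) : ∃ σ : Ω ≃ₐ[k] Ω, j (σ z) ≠ y := by
  by_contra! h
  apply hy
  obtain ⟨c, hc⟩ := (InfiniteGalois.mem_range_algebraMap_iff_fixed z).mpr
    fun σ => j.injective ((h σ).trans (h 1).symm)
  exact ⟨c, by rw [← h 1, AlgEquiv.one_apply, ← hc, AlgHom.commutes]⟩

theorem exists_algHom_apply_ne (k R Ω : Type*) {L : Type*} [Field k] [PerfectField k]
    [CommRing R] [Nontrivial R] [Algebra k R] [Algebra.FiniteType k R] [Field Ω] [Algebra k Ω]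
    [IsAlgClosure k Ω] [Field L] [Algebra k L] (j : Ω →ₐ[k] L) (x : R) {y : L}
    (hy : y ∉ Set.range (algebraMap k L)) : ∃ ψ : R →ₐ[k] Ω, j (ψ x) ≠ y := by
  have := IsAlgClosure.isAlgClosed k (K := Ω)
  obtain ⟨ψ⟩ := IsAlgClosed.nonempty_algHom_of_finiteType k R Ω
  obtain ⟨σ, hσ⟩ := exists_algEquiv_apply_ne j (ψ x) hy
  exact ⟨(σ : Ω →ₐ[k] Ω).comp ψ, hσ⟩

theorem Subfield.exists_ringHom_apply_ne {K : Type*} [Field K] (F : Subfield K) [IsAlgClosed F]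
    (R : Subalgebra (⊥ : Subfield K) K) [Algebra.FiniteType (⊥ : Subfield K) R] {x : R}
    (hx : (x : K) ∉ (⊥ : Subfield K)) : ∃ ψ : R →+* K, ψ x ≠ x := by
  let k := (⊥ : Subfield K)
  let : Algebra k F := (Subfield.inclusion bot_le).toAlgebra
  let j : algebraicClosure k F →ₐ[k] K :=
    { toRingHom := F.subtype.comp (algebraicClosure k F).val.toRingHom, commutes' _ := rfl }
  obtain ⟨ψ, hψ⟩ := exists_algHom_apply_ne k R (algebraicClosure k F) j x (y := x)
    fun ⟨c, hc⟩ => hx (hc ▸ c.2)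
  exact ⟨(j.comp ψ).toRingHom, hψ⟩

/-- If a field `K` contains an algebraically closed subfield, then the set of arithmetically
fixed elements of `K` is exactly the prime subfield of `K` (the smallest subfield `⊥`). -/
theorem arithFixed_eq_prime_subfield (K : Type*) [Field K]
    (F : Subfield K) (hF : IsAlgClosed F) :
    {r : K | ArithFixed r} = ((⊥ : Subfield K) : Set K) := by
  ext r
  refine ⟨fun ⟨A, hrA, hfix⟩ => ?_, arithFixed_of_mem_bot⟩
  by_contra hr
  let R := Algebra.adjoin (⊥ : Subfield K) (A : Set K)
  have : Algebra.FiniteType (⊥ : Subfield K) R :=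
    (Subalgebra.fg_iff_finiteType R).mp (Subalgebra.fg_adjoin_finset A)
  obtain ⟨ψ, hψ⟩ := F.exists_ringHom_apply_ne R (x := ⟨r, Algebra.subset_adjoin hrA⟩) hr
  exact hψ ((Subtype.val_injective.extend_apply ψ id _).symm.trans
    (hfix _ (ArithmeticMap.of_ringHom ψ Algebra.subset_adjoin)))
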